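/- Let p(z) = Σ_{k=0}^d a_k z^k be a real-rooted polynomial with non-negative real coefficients, and let 0 ≤ r ≤ d be an integer. Then a_r ≥ C(d,r) · (r/d)^r · ((d-r)/d)^{d-r} · inf_{t>0} p(t)/t^r. -/

import Mathlib

/-!
Write `a_k` for the coefficients of `p` and `b_k = a_k / C(d, k)`. Real-rootedness survives
differentiation (Rolle) and reflection `X ^ d * p (1 / X)`; combining the two reduces `p` to a
quadratic whose coefficients are `a_k, a_{k+1}, a_{k+2}` up to binomial factors, and its
discriminant gives Newton's inequalities `b_k b_{k+2} ≤ b_{k+1}^2`. As the roots are `≤ 0`, the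
coefficients are elementary symmetric functions of nonnegative numbers, so the positive ones form
an interval of indices.

If `a_i = 0` for all `i < r`, or for all `i > r`, then `p t / t ^ r → a_r` as `t → 0` or
`t → ∞`, and the constant is at most `1`. Otherwise `b_r, b_{r+1} > 0`, and log-concavity bounds
`b_k` by the geometric sequence `b_r ρ^(k-r)` with `ρ = b_{r+1} / b_r`, that is
`p t ≤ b_r ρ^(-r) (1 + ρ t)^d`. The function `(1 + u)^d / u^r` attains its minimum
`d^d / (r^r (d-r)^(d-r))` at `u = r / (d - r)`; taking `ρ t = u` gives the bound.
-/

open Polynomial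

namespace Multiset

variable {R : Type*} [CommSemiring R] [LinearOrder R] [IsStrictOrderedRing R]

theorem esymm_pos_of_le {s : Multiset R} (hs : ∀ x ∈ s, 0 ≤ x) {m n : ℕ} (hmn : m ≤ n)
    (h : 0 < s.esymm n) : 0 < s.esymm m := by
  obtain ⟨t, ht, htpos⟩ : ∃ t ∈ s.powersetCard n, 0 < t.prod := by
    by_contra! hneg
    refine h.not_ge ((sum_le_card_nsmul _ 0 fun x hx => ?_).trans (nsmul_zero _).le)
    obtain ⟨t, ht, rfl⟩ := mem_map.1 hx
    exact hneg t ht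
  rw [mem_powersetCard] at ht
  obtain ⟨u, hu⟩ : ∃ u, u ∈ t.powersetCard m := by
    rw [← card_pos_iff_exists_mem, card_powersetCard, ht.2]
    exact Nat.choose_pos hmn
  rw [mem_powersetCard] at hu
  have hupos : 0 < u.prod := prod_pos fun x hx =>
    (hs x (mem_of_le (hu.1.trans ht.1) hx)).lt_of_ne' fun hx0 =>
      htpos.ne' (prod_eq_zero (hx0 ▸ mem_of_le hu.1 hx))
  refine hupos.trans_le (single_le_sum (fun x hx => ?_) _
    (mem_map_of_mem _ (mem_powersetCard.2 ⟨hu.1.trans ht.1, hu.2⟩)))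
  obtain ⟨v, hv, rfl⟩ := mem_map.1 hx
  exact prod_nonneg fun y hy => hs y (mem_of_le (mem_powersetCard.1 hv).1 hy)

end Multiset

theorem choose_mul_pow_mul_pow_le_add_pow {R : Type*} [CommSemiring R] [PartialOrder R]
    [IsOrderedRing R] {x y : R} (hx : 0 ≤ x) (hy : 0 ≤ y) (d r : ℕ) :
    (d.choose r : R) * x ^ r * y ^ (d - r) ≤ (x + y) ^ d := by
  rcases lt_or_ge d r with hdr | hr
  · rw [Nat.choose_eq_zero_of_lt hdr, Nat.cast_zero, zero_mul, zero_mul]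
    positivity
  rw [add_pow]
  refine le_trans (le_of_eq (by ring))
    (Finset.single_le_sum (f := fun i => x ^ i * y ^ (d - i) * d.choose i)
      (fun i _ => by positivity) (Finset.mem_range.2 (Nat.lt_succ_of_le hr)))

theorem pow_mul_pow_mul_one_add_div_pow {x y : ℝ} (hy : y ≠ 0) (hxy : x + y = 1) (r e : ℕ) :
    x ^ r * y ^ e * (1 + x / y) ^ (r + e) = (x / y) ^ r := by
  rw [show 1 + x / y = y⁻¹ by field_simp; linarith, div_pow, pow_add, inv_pow, inv_pow]
  field_simp

theorem le_pow_mul_of_logConcave {c : ℕ → ℝ} {N : ℕ} {ρ : ℝ} (hρ : 0 ≤ ρ) (hc : ∀ k, 0 ≤ c k)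
    (hlc : ∀ k, k + 2 ≤ N → c k * c (k + 2) ≤ c (k + 1) ^ 2)
    (hzero : ∀ k, k < N → c k = 0 → c (k + 1) = 0) (h1 : c 1 ≤ ρ * c 0) :
    ∀ m ≤ N, c m ≤ ρ ^ m * c 0 := by
  have hstep (m : ℕ) (hm : m + 1 ≤ N) : c (m + 1) ≤ ρ * c m := by
    induction m with
    | zero => exact h1
    | succ m ih =>
      rcases (hc m).eq_or_lt with hm0 | hmpos
      · rw [hzero (m + 1) (by omega) (hzero m (by omega) hm0.symm)]
        exact mul_nonneg hρ (hc _)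
      · refine le_of_mul_le_mul_left ?_ hmpos
        calc c m * c (m + 2) ≤ c (m + 1) * c (m + 1) := (hlc m (by omega)).trans_eq (sq _)
          _ ≤ c (m + 1) * (ρ * c m) := mul_le_mul_of_nonneg_left (ih (by omega)) (hc _)
          _ = c m * (ρ * c (m + 1)) := by ring
  intro m hm
  induction m with
  | zero => simp
  | succ m ih =>
    calc c (m + 1) ≤ ρ * c m := hstep m hm
      _ ≤ ρ * (ρ ^ m * c 0) := mul_le_mul_of_nonneg_left (ih (by omega)) hρ
      _ = ρ ^ (m + 1) * c 0 := by ring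

theorem mul_pow_le_mul_pow_of_logConcave {b : ℕ → ℝ} {d r : ℕ} (hb : ∀ k, 0 ≤ b k)
    (hlc : ∀ k, k + 2 ≤ d → b k * b (k + 2) ≤ b (k + 1) ^ 2)
    (hsupp : {k | 0 < b k}.OrdConnected) (hrd : r < d) (hr : 0 < b r) (hr1 : 0 < b (r + 1))
    {i : ℕ} (hi : i ≤ d) : b i * (b (r + 1) / b r) ^ r ≤ b r * (b (r + 1) / b r) ^ i := by
  set ρ := b (r + 1) / b r
  have hρ : 0 < ρ := div_pos hr1 hr
  rcases le_or_gt r i with hri | hir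
  · have hup := le_pow_mul_of_logConcave (c := fun k => b (r + k)) (N := i - r) hρ.le
      (fun k => hb _) (fun k hk => by simpa only [add_assoc] using hlc (r + k) (by omega))
      (fun k _ hk => by
        by_contra hk1
        exact (hsupp.out hr ((hb _).lt_of_ne' hk1) ⟨le_self_add, by omega⟩).ne' hk)
      (by simp [ρ, div_mul_cancel₀ _ hr.ne']) (i - r) le_rfl
    rw [Nat.add_sub_cancel' hri, add_zero] at hup
    calc b i * ρ ^ r ≤ ρ ^ (i - r) * b r * ρ ^ r := mul_le_mul_of_nonneg_right hup (by positivity)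
      _ = b r * ρ ^ i := by rw [mul_right_comm, pow_sub_mul_pow _ hri, mul_comm]
  · have hdown := le_pow_mul_of_logConcave (c := fun k => b (r - k)) (N := r - i)
      (inv_nonneg.2 hρ.le) (fun k => hb _)
      (fun k hk => by
        have := hlc (r - (k + 2)) (by omega)
        rwa [show r - (k + 2) + 2 = r - k by omega, show r - (k + 2) + 1 = r - (k + 1) by omega,
          mul_comm] at this)
      (fun k _ hk => by
        by_contra hk1
        exact (hsupp.out ((hb _).lt_of_ne' hk1) hr ⟨by omega, by omega⟩).ne' hk)
      (by
        have := hlc (r - 1) (by omega)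
        rw [show r - 1 + 2 = r + 1 by omega, show r - 1 + 1 = r by omega] at this
        rw [Nat.sub_zero, le_inv_mul_iff₀ hρ, div_mul_eq_mul_div, div_le_iff₀ hr]
        linarith) (r - i) le_rfl
    rw [Nat.sub_sub_self hir.le, Nat.sub_zero, inv_pow, le_inv_mul_iff₀ (by positivity)] at hdown
    calc b i * ρ ^ r = ρ ^ (r - i) * b i * ρ ^ i := by
          rw [mul_right_comm, pow_sub_mul_pow _ hir.le, mul_comm]
      _ ≤ b r * ρ ^ i := mul_le_mul_of_nonneg_right hdown (by positivity)

namespace Polynomial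

section OrderedSemiring

variable {R : Type*} [CommSemiring R] [LinearOrder R] [IsStrictOrderedRing R]

theorem eval_nonneg_of_coeff_nonneg {p : R[X]} (hcoeff : ∀ k, 0 ≤ p.coeff k) {x : R}
    (hx : 0 ≤ x) : 0 ≤ p.eval x := by
  rw [eval_eq_sum]
  exact Finset.sum_nonneg fun k _ => mul_nonneg (hcoeff k) (pow_nonneg hx k)

theorem eval_pos_of_coeff_nonneg {p : R[X]} (hp : p ≠ 0) (hcoeff : ∀ k, 0 ≤ p.coeff k) {x : R}
    (hx : 0 < x) : 0 < p.eval x := by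
  rw [eval_eq_sum]
  refine Finset.sum_pos' (fun k _ => mul_nonneg (hcoeff k) (pow_nonneg hx.le k))
    ⟨p.natDegree, natDegree_mem_support_of_nonzero hp, mul_pos ?_ (pow_pos hx _)⟩
  exact (hcoeff _).lt_of_ne' (leadingCoeff_ne_zero.2 hp)

end OrderedSemiring

theorem eval_le_mul_one_add_mul_pow {p : ℝ[X]} {d : ℕ} (hdeg : p.natDegree ≤ d)
    {β ρ t : ℝ} (ht : 0 ≤ t) (h : ∀ i ≤ d, p.coeff i ≤ β * d.choose i * ρ ^ i) :
    p.eval t ≤ β * (1 + ρ * t) ^ d := by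
  rw [eval_eq_sum_range' (Nat.lt_succ_of_le hdeg), add_comm, add_pow, Finset.mul_sum]
  refine Finset.sum_le_sum fun i hi => ?_
  calc p.coeff i * t ^ i ≤ β * d.choose i * ρ ^ i * t ^ i :=
        mul_le_mul_of_nonneg_right (h i (Nat.lt_succ_iff.1 (Finset.mem_range.1 hi)))
          (pow_nonneg ht i)
    _ = β * ((ρ * t) ^ i * 1 ^ (d - i) * d.choose i) := by ring

theorem le_eval_zero_of_forall_pos {q : ℝ[X]} {c : ℝ} (h : ∀ u > 0, c ≤ q.eval u) :
    c ≤ q.eval 0 :=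
  ge_of_tendsto (q.continuous.tendsto 0 |>.mono_left nhdsWithin_le_nhds)
    (eventually_nhdsWithin_of_forall (s := Set.Ioi 0) h)

theorem le_coeff_of_forall_lt_coeff_eq_zero {p : ℝ[X]} {r : ℕ} {c : ℝ}
    (hlow : ∀ i < r, p.coeff i = 0) (h : ∀ t > 0, c ≤ p.eval t / t ^ r) : c ≤ p.coeff r := by
  obtain ⟨q, rfl⟩ := X_pow_dvd_iff.2 hlow
  have hq : (X ^ r * q).coeff r = q.coeff 0 := by simpa using coeff_X_pow_mul q r 0
  rw [hq, coeff_zero_eq_eval_zero]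
  refine le_eval_zero_of_forall_pos fun t ht => ?_
  simpa [mul_div_cancel_left₀ _ (pow_ne_zero r ht.ne')] using h t ht

theorem le_coeff_of_natDegree_le {p : ℝ[X]} {r : ℕ} {c : ℝ}
    (hdeg : p.natDegree ≤ r) (h : ∀ t > 0, c ≤ p.eval t / t ^ r) : c ≤ p.coeff r := by
  have hreflect (u : ℝ) (hu : 0 < u) : (reflect r p).eval u = p.eval u⁻¹ / u⁻¹ ^ r := by
    let _ := invertibleOfNonzero (inv_ne_zero hu.ne')
    have := eval₂_reflect_mul_pow (RingHom.id ℝ) u⁻¹ r p hdeg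
    rw [invOf_eq_inv, inv_inv, eval₂_id, eval₂_id] at this
    rw [← this, mul_div_cancel_right₀ _ (pow_ne_zero r (inv_ne_zero hu.ne'))]
  rw [← Nat.sub_zero r, ← revAt_le (Nat.zero_le r), ← coeff_reflect, coeff_zero_eq_eval_zero]
  exact le_eval_zero_of_forall_pos fun u hu => hreflect u hu ▸ h u⁻¹ (inv_pos.2 hu)

theorem splits_of_forall_aeval_eq_zero_im_eq_zero {p : ℝ[X]}
    (h : ∀ z : ℂ, aeval z p = 0 → z.im = 0) : p.Splits := by
  refine (IsAlgClosed.splits (p.map (algebraMap ℝ ℂ))).of_splits_map _ fun z hz => ⟨z.re, ?_⟩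
  have hz' : aeval z p = 0 := by
    rw [aeval_def, eval₂_eq_eval_map]; exact (mem_roots'.1 hz).2
  exact Complex.ext (by simp) (by simp [h z hz'])

theorem Splits.derivative {p : ℝ[X]} (hp : p.Splits) : (Polynomial.derivative p).Splits := by
  rw [splits_iff_card_roots] at hp ⊢
  have := p.card_roots_le_derivative
  have := (Polynomial.derivative p).card_roots'
  have := p.natDegree_derivative_le
  omega

theorem Splits.iterate_derivative {p : ℝ[X]} (hp : p.Splits) (k : ℕ) :
    (Polynomial.derivative^[k] p).Splits := by
  induction k with
  | zero => exact hp
  | succ k ih => rw [Function.iterate_succ_apply']; exact ih.derivative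

theorem Splits.hasseDeriv {p : ℝ[X]} (hp : p.Splits) (k : ℕ) :
    (Polynomial.hasseDeriv k p).Splits := by
  have h : Polynomial.hasseDeriv k p = C (k.factorial : ℝ)⁻¹ * Polynomial.derivative^[k] p := by
    rw [← factorial_smul_hasseDeriv, LinearMap.smul_apply, nsmul_eq_mul, ← C_eq_natCast,
      ← mul_assoc, ← C_mul, inv_mul_cancel₀ (by positivity), C_1, one_mul]
  rw [h]
  exact (hp.iterate_derivative k).C_mul _

theorem Splits.reflect {K : Type*} [Field K] {f : K[X]} (hf : f.Splits) {N : ℕ}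
    (hN : f.natDegree ≤ N) : (Polynomial.reflect N f).Splits := by
  have hprod (s : Multiset K) :
      (Polynomial.reflect (Multiset.card s) (s.map (X - C ·)).prod).Splits := by
    induction s using Multiset.induction with
    | empty => simp
    | cons a s ih =>
      rw [Multiset.map_cons, Multiset.prod_cons, Multiset.card_cons, add_comm,
        reflect_mul _ _ (natDegree_X_sub_C_le a) (natDegree_multiset_prod_X_sub_C_eq_card s).le]
      exact (Splits.of_natDegree_le_one
        (natDegree_reflect_le.trans (max_le le_rfl (natDegree_X_sub_C_le a)))).mul ih
  rw [hf.natDegree_eq_card_roots] at hN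
  obtain ⟨e, rfl⟩ := Nat.exists_eq_add_of_le hN
  have hfac := hf.eq_prod_roots
  set s := f.roots
  rw [hfac, reflect_C_mul, ← mul_one (Multiset.prod _),
    reflect_mul _ _ (natDegree_multiset_prod_X_sub_C_eq_card _).le
      (natDegree_one.trans_le e.zero_le), ← C_1, reflect_C]
  exact ((hprod _).mul ((Splits.C _).mul (Splits.X_pow e))).C_mul _

theorem Splits.discrim_coeff_nonneg {K : Type*} [Field K] [LinearOrder K] [IsStrictOrderedRing K]
    {f : K[X]} (hf : f.Splits) (h2 : f.natDegree ≤ 2) :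
    0 ≤ discrim (f.coeff 2) (f.coeff 1) (f.coeff 0) := by
  by_cases ha : f.coeff 2 = 0
  · rw [discrim, ha]; nlinarith [sq_nonneg (f.coeff 1)]
  have hdeg : f.natDegree = 2 := le_antisymm h2 (le_natDegree_of_ne_zero ha)
  obtain ⟨x, hx⟩ := hf.exists_eval_eq_zero
    (by rw [degree_eq_natDegree (by rintro rfl; simp at ha), hdeg]; decide)
  rw [eval_eq_sum_range, hdeg] at hx
  simp only [Finset.sum_range_succ, Finset.sum_range_zero] at hx
  rw [discrim_eq_sq_of_quadratic_eq_zero (x := x) (by linear_combination hx)]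
  positivity

theorem Splits.newton_ineq {f : ℝ[X]} (hf : f.Splits) {k m : ℕ}
    (hdeg : f.natDegree ≤ k + m + 2) :
    ((k : ℝ) + 2) * (m + 2) * (f.coeff k * f.coeff (k + 2)) ≤
      ((k : ℝ) + 1) * (m + 1) * f.coeff (k + 1) ^ 2 := by
  set g := Polynomial.hasseDeriv k f
  have hg : g.natDegree ≤ m + 2 := (natDegree_hasseDeriv_le f k).trans (by omega)
  set s := Polynomial.hasseDeriv m (Polynomial.reflect (m + 2) g)
  have hs : s.natDegree ≤ 2 := (natDegree_hasseDeriv_le _ m).trans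
    (by have := natDegree_reflect_le.trans (max_le le_rfl hg); omega)
  have hdisc := ((hf.hasseDeriv k).reflect hg |>.hasseDeriv m).discrim_coeff_nonneg hs
  have hcoeff (j : ℕ) (hj : j ≤ 2) :
      s.coeff j = ((j + m).choose m : ℝ) * ((2 - j + k).choose k) * f.coeff (2 - j + k) := by
    rw [hasseDeriv_coeff, coeff_reflect, revAt_le (by omega), hasseDeriv_coeff,
      show m + 2 - (j + m) = 2 - j by omega, mul_assoc]
  have hchoose (n : ℕ) : ((n + 2).choose n : ℝ) = (n + 2) * (n + 1) / 2 := by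
    rw [Nat.choose_symm_add, Nat.cast_choose_two]; push_cast; ring
  have hs0 : s.coeff 0 = (k + 2) * (k + 1) / 2 * f.coeff (k + 2) := by
    rw [hcoeff 0 (by norm_num), add_comm 2 k, hchoose]; simp
  have hs1 : s.coeff 1 = (m + 1) * (k + 1) * f.coeff (k + 1) := by
    rw [hcoeff 1 (by norm_num)]; simp [add_comm]
  have hs2 : s.coeff 2 = (m + 2) * (m + 1) / 2 * f.coeff k := by
    rw [hcoeff 2 le_rfl, add_comm 2 m, hchoose]; simp
  rw [hs0, hs1, hs2, discrim] at hdisc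
  refine le_of_mul_le_mul_left ?_ (by positivity : (0 : ℝ) < (k + 1) * (m + 1))
  linear_combination hdisc

theorem Splits.coeff_div_choose_mul_le {p : ℝ[X]} (hp : p.Splits) {d k : ℕ}
    (hdeg : p.natDegree ≤ d) (hk : k + 2 ≤ d) :
    p.coeff k / d.choose k * (p.coeff (k + 2) / d.choose (k + 2)) ≤
      (p.coeff (k + 1) / d.choose (k + 1)) ^ 2 := by
  obtain ⟨m, rfl⟩ : ∃ m, d = k + m + 2 := ⟨d - k - 2, by omega⟩
  have hc1 : ((k + m + 2).choose (k + 1) : ℝ) * (k + 1) = (k + m + 2).choose k * (m + 2) := by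
    have := Nat.choose_succ_right_eq (k + m + 2) k
    rw [show k + m + 2 - k = m + 2 by omega] at this
    exact_mod_cast this
  have hc2 : ((k + m + 2).choose (k + 2) : ℝ) * (k + 2) =
      (k + m + 2).choose (k + 1) * (m + 1) := by
    have := Nat.choose_succ_right_eq (k + m + 2) (k + 1)
    rw [show k + m + 2 - (k + 1) = m + 1 by omega] at this
    exact_mod_cast this
  have h0 : (0 : ℝ) < (k + m + 2).choose k := by exact_mod_cast Nat.choose_pos (by omega)
  have h1 : (0 : ℝ) < (k + m + 2).choose (k + 1) := by exact_mod_cast Nat.choose_pos (by omega)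
  have h2 : (0 : ℝ) < (k + m + 2).choose (k + 2) := by exact_mod_cast Nat.choose_pos (by omega)
  rw [div_mul_div_comm, div_pow, div_le_div_iff₀ (by positivity) (by positivity)]
  refine le_of_mul_le_mul_right ?_ (by positivity : (0 : ℝ) < (k + 1) * (k + 2))
  have hnewton := mul_le_mul_of_nonneg_left (hp.newton_ineq hdeg) (mul_nonneg h0.le h1.le)
  linear_combination hnewton - (p.coeff (k + 1) ^ 2 * (k + m + 2).choose k * (k + 1)) * hc2
    + (p.coeff k * p.coeff (k + 2) * (k + m + 2).choose (k + 1) * (k + 2)) * hc1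

theorem Splits.ordConnected_setOf_coeff_pos {p : ℝ[X]} (hp : p.Splits)
    (hcoeff : ∀ k, 0 ≤ p.coeff k) : {k | 0 < p.coeff k}.OrdConnected := by
  refine ⟨fun i hi k hk j ⟨hij, hjk⟩ => ?_⟩
  have hp0 : p ≠ 0 := by rintro rfl; simp at hi
  have hkn : k ≤ p.natDegree := le_natDegree_of_ne_zero (ne_of_gt hk)
  have hroots : ∀ x ∈ p.roots.map Neg.neg, 0 ≤ x := by
    intro x hx
    obtain ⟨y, hy, rfl⟩ := Multiset.mem_map.1 hx
    refine neg_nonneg.2 (not_lt.1 fun hy0 => ?_)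
    exact (eval_pos_of_coeff_nonneg hp0 hcoeff hy0).ne' (isRoot_of_mem_roots hy)
  have hvieta (l : ℕ) (hl : l ≤ p.natDegree) :
      p.coeff l = p.leadingCoeff * (p.roots.map Neg.neg).esymm (p.natDegree - l) := by
    rw [coeff_eq_esymm_roots_of_splits hp hl, Multiset.esymm_neg, mul_assoc]
  have hlc : 0 < p.leadingCoeff := (hcoeff _).lt_of_ne' (leadingCoeff_ne_zero.2 hp0)
  change 0 < p.coeff i at hi
  rw [hvieta i (hij.trans (hjk.trans hkn))] at hi
  change 0 < p.coeff j
  rw [hvieta j (hjk.trans hkn)]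
  exact mul_pos hlc (Multiset.esymm_pos_of_le hroots (by omega) (pos_of_mul_pos_right hi hlc.le))

theorem Splits.choose_mul_pow_mul_pow_mul_le_coeff {p : ℝ[X]} (hp : p.Splits)
    (hcoeff : ∀ k, 0 ≤ p.coeff k) {d r : ℕ} (hdeg : p.natDegree ≤ d) (hr0 : 0 < r)
    (hr : 0 < p.coeff r) (hr1 : 0 < p.coeff (r + 1)) {c : ℝ}
    (hc : ∀ t > 0, c ≤ p.eval t / t ^ r) :
    (d.choose r : ℝ) * ((r : ℝ) / d) ^ r * (((d - r : ℕ) : ℝ) / d) ^ (d - r) * c ≤ p.coeff r := by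
  have hrd : r < d := (le_natDegree_of_ne_zero hr1.ne').trans hdeg
  have hchoose (k : ℕ) (hk : k ≤ d) : (0 : ℝ) < d.choose k := by exact_mod_cast Nat.choose_pos hk
  set b : ℕ → ℝ := fun k => p.coeff k / d.choose k
  have hb_pos (k : ℕ) : 0 < b k ↔ 0 < p.coeff k := by
    by_cases hk : k ≤ d
    · exact div_pos_iff_of_pos_right (hchoose k hk)
    · simp [b, coeff_eq_zero_of_natDegree_lt (hdeg.trans_lt (not_le.1 hk))]
  have hcoeff_eq (k : ℕ) (hk : k ≤ d) : p.coeff k = d.choose k * b k :=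
    (mul_div_cancel₀ _ (hchoose k hk).ne').symm
  have hbr : 0 < b r := (hb_pos r).2 hr
  set ρ := b (r + 1) / b r
  have hρ : 0 < ρ := div_pos ((hb_pos _).2 hr1) hbr
  have hdom (i : ℕ) (hi : i ≤ d) : p.coeff i ≤ b r / ρ ^ r * d.choose i * ρ ^ i := by
    have := mul_pow_le_mul_pow_of_logConcave (fun k => div_nonneg (hcoeff k) (Nat.cast_nonneg _))
      (fun k hk => hp.coeff_div_choose_mul_le hdeg hk)
      (Set.ext hb_pos ▸ hp.ordConnected_setOf_coeff_pos hcoeff) hrd hbr ((hb_pos _).2 hr1) hi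
    rw [hcoeff_eq i hi, div_mul_eq_mul_div, div_mul_eq_mul_div, le_div_iff₀ (by positivity)]
    calc d.choose i * b i * ρ ^ r = d.choose i * (b i * ρ ^ r) := by ring
      _ ≤ d.choose i * (b r * ρ ^ i) := mul_le_mul_of_nonneg_left this (hchoose i hi).le
      _ = b r * d.choose i * ρ ^ i := by ring
  obtain ⟨e, rfl⟩ := Nat.exists_eq_add_of_le hrd.le
  rw [Nat.add_sub_cancel_left]
  set x : ℝ := r / (r + e : ℕ)
  set y : ℝ := e / (r + e : ℕ)
  have hx : 0 < x := by positivity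
  have hy : 0 < y := div_pos (by exact_mod_cast (by omega : 0 < e)) (by positivity)
  have hxy : x + y = 1 := by rw [← add_div, div_eq_one_iff_eq (by positivity)]; push_cast; ring
  set t := x / y / ρ
  have ht : 0 < t := by positivity
  calc (r + e).choose r * x ^ r * y ^ e * c
      ≤ (r + e).choose r * x ^ r * y ^ e * (p.eval t / t ^ r) :=
        mul_le_mul_of_nonneg_left (hc t ht) (by positivity)
    _ ≤ (r + e).choose r * x ^ r * y ^ e * (b r / ρ ^ r * (1 + ρ * t) ^ (r + e) / t ^ r) := by
        gcongr; exact eval_le_mul_one_add_mul_pow hdeg ht.le hdom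
    _ = (r + e).choose r * b r * (x ^ r * y ^ e * (1 + x / y) ^ (r + e) / (x / y) ^ r) := by
        rw [mul_div_cancel₀ _ hρ.ne']
        simp only [t, div_pow]
        field_simp
    _ = p.coeff r := by
        rw [pow_mul_pow_mul_one_add_div_pow hy.ne' hxy, div_self (by positivity), mul_one,
          hcoeff_eq r hrd.le]

end Polynomial

/-- If `p` is real-rooted with nonnegative coefficients and `deg p ≤ d`, then
`a_r ≥ C(d,r) (r/d)^r ((d-r)/d)^(d-r) · inf_{t>0} p(t)/t^r`. -/
theorem stmt_6 (d r : ℕ) (p : Polynomial ℝ)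
    (hdeg : p.natDegree ≤ d)
    (hroots : ∀ z : ℂ, Polynomial.aeval z p = 0 → z.im = 0)
    (hcoeff : ∀ k, 0 ≤ p.coeff k)
    (hr : r ≤ d) :
    (d.choose r : ℝ) * ((r : ℝ) / d) ^ r * (((d - r : ℕ) : ℝ) / d) ^ (d - r) *
        (⨅ t : Set.Ioi (0 : ℝ), p.eval (t : ℝ) / (t : ℝ) ^ r)
      ≤ p.coeff r := by
  have hp := splits_of_forall_aeval_eq_zero_im_eq_zero hroots
  have hval (t : Set.Ioi (0 : ℝ)) : 0 ≤ p.eval (t : ℝ) / (t : ℝ) ^ r :=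
    div_nonneg (eval_nonneg_of_coeff_nonneg hcoeff t.2.le) (pow_nonneg t.2.le r)
  have hinf (t : ℝ) (ht : t > 0) :
      (⨅ t : Set.Ioi (0 : ℝ), p.eval (t : ℝ) / (t : ℝ) ^ r) ≤ p.eval t / t ^ r :=
    ciInf_le ⟨0, Set.forall_mem_range.2 hval⟩ ⟨t, ht⟩
  have hconst : (d.choose r : ℝ) * ((r : ℝ) / d) ^ r * (((d - r : ℕ) : ℝ) / d) ^ (d - r) ≤ 1 :=
    (choose_mul_pow_mul_pow_le_add_pow (by positivity) (by positivity) d r).trans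
      (pow_le_one₀ (by positivity) (by
        rw [← add_div, ← Nat.cast_add, Nat.add_sub_cancel' hr]; exact div_self_le_one _))
  by_cases hlow : ∀ i < r, p.coeff i = 0
  · exact (mul_le_of_le_one_left (le_ciInf hval) hconst).trans
      (le_coeff_of_forall_lt_coeff_eq_zero hlow hinf)
  by_cases hhigh : p.natDegree ≤ r
  · exact (mul_le_of_le_one_left (le_ciInf hval) hconst).trans
      (le_coeff_of_natDegree_le hhigh hinf)
  push Not at hlow hhigh
  obtain ⟨i, hir, hi⟩ := hlow
  have hp0 : p ≠ 0 := by rintro rfl; simp at hi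
  have hpos (j : ℕ) (hij : i ≤ j) (hjn : j ≤ p.natDegree) : 0 < p.coeff j :=
    hp.ordConnected_setOf_coeff_pos hcoeff |>.out ((hcoeff i).lt_of_ne' hi)
      ((hcoeff _).lt_of_ne' (leadingCoeff_ne_zero.2 hp0)) ⟨hij, hjn⟩
  exact hp.choose_mul_pow_mul_pow_mul_le_coeff hcoeff hdeg (by omega)
    (hpos r (by omega) (by omega)) (hpos (r + 1) (by omega) (by omega)) hinf
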